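/- arXiv:2207.06775 — 3 statements merged into one kernel-verified Lean document; each statement's English description precedes it below -/
import Mathlib

section
/- (Propagation of the isometry to non-landmarks.) Let l ≥ d+1, m ≥ 1, let X_L ∈ ℝ^{l×(d+1)} have rank d+1, let X_N ∈ ℝ^{m×(d+1)}, and set A_N := X_N J X_L^⊤. Let T ∈ ℝ^{(d+1)×(d+1)} satisfy T^⊤ J T = J and set X̂_L := X_L T. Then X̂_L^⊤ X̂_L is invertible and A_N X̂_L (X̂_L^⊤ X̂_L)^{−1} J = X_N T; that is, the non-landmark triangulation step applied to the transformed landmark configuration recovers exactly the transformed non-landmark coordinates. -/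
open Matrix Finset

/-- The Lorentz signature matrix `J = diag(1, -1, …, -1)` of size `(d+1) × (d+1)`. -/
noncomputable def lorJ (d : ℕ) : Matrix (Fin (d + 1)) (Fin (d + 1)) ℝ :=
  Matrix.diagonal (fun i => if i = 0 then (1 : ℝ) else -1)

/-- The Lorentz product `x ∘ y = x₁y₁ - (x₂y₂ + ⋯ + x_{d+1}y_{d+1})`. -/
noncomputable def lprod (d : ℕ) (x y : Fin (d + 1) → ℝ) : ℝ :=
  x 0 * y 0 - ∑ i : Fin d, x i.succ * y i.succ

/-- The hyperboloid `H_d = {x : x ∘ x = 1, x₁ > 0}`. -/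
def onHyperboloid (d : ℕ) (x : Fin (d + 1) → ℝ) : Prop :=
  lprod d x x = 1 ∧ 0 < x 0

/-- The inverse hyperbolic cosine. -/
noncomputable def arcosh (x : ℝ) : ℝ :=
  Real.log (x + Real.sqrt (x ^ 2 - 1))

/-- The hyperbolic distance with curvature `-κ`. -/
noncomputable def distH (d : ℕ) (κ : ℝ) (x y : Fin (d + 1) → ℝ) : ℝ :=
  (1 / Real.sqrt κ) * arcosh (lprod d x y)

/-- A positive Lorentz matrix: `Tᵀ J T = J` and `T₁₁ > 0`. -/
def IsPosLorentz (d : ℕ) (T : Matrix (Fin (d + 1)) (Fin (d + 1)) ℝ) : Prop :=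
  Tᵀ * lorJ d * T = lorJ d ∧ 0 < T 0 0

/-- The eigenvalue index selected for column `j` of the `L-hydra` embedding:
column `0` selects eigenvalue index `0` (the largest eigenvalue `λ₁`), and column
`j ≥ 1` selects the `j`-th of the `d` smallest eigenvalues `λ_{l-d+1}, …, λ_l`
(in 0-based indexing: `l - d - 1 + j`). -/
def colIdx {d l : ℕ} (hl : d + 1 ≤ l) (j : Fin (d + 1)) : Fin l :=
  if (j : ℕ) = 0 then ⟨0, by omega⟩ else ⟨l - d - 1 + j, by have := j.isLt; omega⟩

/-- The landmark embedding matrix `X̂_L` with columns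
`√λ₁ q₁, √(−λ_{l−d+1}) q_{l−d+1}, …, √(−λ_l) q_l`. -/
noncomputable def hatXL {d l : ℕ} (hl : d + 1 ≤ l) (Q : Matrix (Fin l) (Fin l) ℝ)
    (lam : Fin l → ℝ) : Matrix (Fin l) (Fin (d + 1)) ℝ :=
  Matrix.of fun i j =>
    (if (j : ℕ) = 0 then Real.sqrt (lam (colIdx hl j))
      else Real.sqrt (-lam (colIdx hl j))) * Q i (colIdx hl j)

/-- The diagonal matrix `diag(1/λ₁, −1/λ_{l−d+1}, …, −1/λ_l)`. -/
noncomputable def hatD {d l : ℕ} (hl : d + 1 ≤ l) (lam : Fin l → ℝ) :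
    Matrix (Fin (d + 1)) (Fin (d + 1)) ℝ :=
  Matrix.diagonal fun j =>
    if (j : ℕ) = 0 then 1 / lam (colIdx hl j) else -(1 / lam (colIdx hl j))

/-- The non-landmark embedding matrix `X̂_N = A_N X̂_L diag(1/λ₁, −1/λ_{l−d+1}, …, −1/λ_l)`. -/
noncomputable def hatXN {d l m : ℕ} (hl : d + 1 ≤ l) (A_N : Matrix (Fin m) (Fin l) ℝ)
    (Q : Matrix (Fin l) (Fin l) ℝ) (lam : Fin l → ℝ) : Matrix (Fin m) (Fin (d + 1)) ℝ :=
  A_N * hatXL hl Q lam * hatD hl lam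

/-- The squared Frobenius norm of a matrix. -/
noncomputable def frobSq {a b : ℕ} (A : Matrix (Fin a) (Fin b) ℝ) : ℝ :=
  ∑ i, ∑ j, (A i j) ^ 2

/-- The Frobenius norm of a matrix. -/
noncomputable def frob {a b : ℕ} (A : Matrix (Fin a) (Fin b) ℝ) : ℝ :=
  Real.sqrt (frobSq A)

/-
The Gram matrix of `X̂_L = X_L T` is `Tᵀ (X_Lᵀ X_L) T`, invertible because `X_L` has full column
rank and `T` is invertible (its inverse is `J Tᵀ J`). Moreover `Tᵀ J T = J` implies the dual
relation `T J Tᵀ = J`, which gives `A_N X̂_L = X_N J X_Lᵀ X_L T = X_N T J (X̂_Lᵀ X̂_L)`;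
cancelling the Gram matrix and using `J² = 1` leaves `X_N T`.
-/

namespace Matrix

lemma isUnit_of_rank_eq_card {n K : Type*} [Fintype n] [DecidableEq n] [Field K]
    {A : Matrix n n K} (h : A.rank = Fintype.card n) : IsUnit A := by
  rw [← mulVec_surjective_iff_isUnit]
  refine LinearMap.range_eq_top.mp <|
    Submodule.eq_top_of_finrank_eq (S := LinearMap.range A.mulVecLin) ?_
  rw [← rank, h, Module.finrank_fintype_fun_eq_card]

variable {n R : Type*} [Fintype n] [DecidableEq n] [CommRing R] {J T : Matrix n n R}

lemma mul_transpose_mul_mul_eq_one (hJ : J * J = 1) (hT : Tᵀ * J * T = J) :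
    J * Tᵀ * J * T = 1 := by
  rw [Matrix.mul_assoc J Tᵀ J, Matrix.mul_assoc, hT, hJ]

lemma isUnit_of_transpose_mul_mul_eq (hJ : J * J = 1) (hT : Tᵀ * J * T = J) :
    IsUnit T :=
  (isUnit_iff_isUnit_det T).mpr
    (isUnit_det_of_left_inverse (mul_transpose_mul_mul_eq_one hJ hT))

lemma mul_mul_transpose_eq_of_transpose_mul_mul_eq (hJ : J * J = 1)
    (hT : Tᵀ * J * T = J) : T * J * Tᵀ = J := by
  have hTinv : T * (J * Tᵀ * J) = 1 := mul_eq_one_comm.mp (mul_transpose_mul_mul_eq_one hJ hT)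
  calc T * J * Tᵀ = T * (J * Tᵀ * J) * J := by simp only [Matrix.mul_assoc, hJ, Matrix.mul_one]
    _ = J := by rw [hTinv, Matrix.one_mul]

end Matrix

lemma lorJ_mul_self (d : ℕ) : lorJ d * lorJ d = 1 := by
  ext i j
  simp only [lorJ, diagonal_mul_diagonal, diagonal_apply, one_apply]
  split_ifs <;> norm_num

theorem stmt_13_general {d l m : ℕ}
    (X_L : Matrix (Fin l) (Fin (d + 1)) ℝ) (hrank : X_L.rank = d + 1)
    (X_N : Matrix (Fin m) (Fin (d + 1)) ℝ)
    (A_N : Matrix (Fin m) (Fin l) ℝ) (hAN : A_N = X_N * lorJ d * X_Lᵀ)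
    (T : Matrix (Fin (d + 1)) (Fin (d + 1)) ℝ) (hT : Tᵀ * lorJ d * T = lorJ d)
    (XhatL : Matrix (Fin l) (Fin (d + 1)) ℝ) (hXhatL : XhatL = X_L * T) :
    IsUnit (XhatLᵀ * XhatL) ∧
    A_N * XhatL * (XhatLᵀ * XhatL)⁻¹ * lorJ d = X_N * T := by
  have hJ := lorJ_mul_self d
  have hTunit := isUnit_of_transpose_mul_mul_eq hJ hT
  have hGram : XhatLᵀ * XhatL = Tᵀ * (X_Lᵀ * X_L) * T := by
    simp only [hXhatL, transpose_mul, Matrix.mul_assoc]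
  have hGramUnit : IsUnit (XhatLᵀ * XhatL) := by
    have hB : IsUnit (X_Lᵀ * X_L) :=
      isUnit_of_rank_eq_card (by rw [rank_transpose_mul_self, hrank, Fintype.card_fin])
    rw [hGram]
    exact ((isUnit_transpose T).mpr hTunit |>.mul hB).mul hTunit
  have hANXhatL : A_N * XhatL = X_N * T * lorJ d * (XhatLᵀ * XhatL) :=
    calc A_N * XhatL = X_N * lorJ d * (X_Lᵀ * X_L) * T := by
          simp only [hAN, hXhatL, Matrix.mul_assoc]
      _ = X_N * (T * lorJ d * Tᵀ) * (X_Lᵀ * X_L) * T := by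
          rw [mul_mul_transpose_eq_of_transpose_mul_mul_eq hJ hT]
      _ = X_N * T * lorJ d * (XhatLᵀ * XhatL) := by
          simp only [hGram, Matrix.mul_assoc]
  refine ⟨hGramUnit, ?_⟩
  rw [hANXhatL, mul_nonsing_inv_cancel_right _ _ ((isUnit_iff_isUnit_det _).mp hGramUnit),
    Matrix.mul_assoc, hJ, Matrix.mul_one]

/-- propagation of the isometry to non-landmarks — the
triangulation step applied to `X̂_L = X_L T` recovers `X_N T`. -/
theorem stmt_13 {d l m : ℕ} (hd : 1 ≤ d) (hl : d + 1 ≤ l) (hm : 1 ≤ m)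
    (X_L : Matrix (Fin l) (Fin (d + 1)) ℝ) (hrank : X_L.rank = d + 1)
    (X_N : Matrix (Fin m) (Fin (d + 1)) ℝ)
    (A_N : Matrix (Fin m) (Fin l) ℝ) (hAN : A_N = X_N * lorJ d * X_Lᵀ)
    (T : Matrix (Fin (d + 1)) (Fin (d + 1)) ℝ) (hT : Tᵀ * lorJ d * T = lorJ d)
    (XhatL : Matrix (Fin l) (Fin (d + 1)) ℝ) (hXhatL : XhatL = X_L * T) :
    IsUnit (XhatLᵀ * XhatL) ∧
    A_N * XhatL * (XhatLᵀ * XhatL)⁻¹ * lorJ d = X_N * T :=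
  stmt_13_general X_L hrank X_N A_N hAN T hT XhatL hXhatL
end

section
/- Let l ≥ d+1 and let X ∈ ℝ^{l×(d+1)} have rank d+1. Then the symmetric matrix X J X^⊤ has exactly one strictly positive eigenvalue, exactly d strictly negative eigenvalues, and the eigenvalue 0 with multiplicity l−d−1 (all counted with multiplicity). -/
open Matrix Finset

/-! The quadratic form of `X J Xᵀ` at `v` is `w₀² - ∑ⱼ w_{j+1}²` with `w = Xᵀ v`. It is
nonpositive on the kernel of `v ↦ w₀` and nonnegative on the kernel of `v ↦ (w_{j+1})ⱼ`, so, as in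
Sylvester's law of inertia, there are at most `1` positive and at most `d` negative eigenvalues.
Since `X` has full column rank and `J` is invertible, `X J Xᵀ` has rank `d + 1`, which forces both
bounds to be attained. -/

namespace Matrix

lemma rank_mul_eq_left_of_rank_eq_card {K m k o : Type*} [Field K] [Fintype k] [Fintype o]
    (M : Matrix m k K) (N : Matrix k o K) (hN : N.rank = Fintype.card k) :
    (M * N).rank = M.rank := by
  have hsurj : LinearMap.range N.mulVecLin = ⊤ :=
    Submodule.eq_top_of_finrank_eq (by rw [← rank, hN, Module.finrank_fintype_fun_eq_card])
  rw [rank, rank, mulVecLin_mul, LinearMap.range_comp_of_range_eq_top _ hsurj]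

lemma dotProduct_mul_mul_transpose_mulVec {R : Type*} [CommSemiring R] {m k : Type*}
    [Fintype m] [Fintype k] (X : Matrix m k R) (B : Matrix k k R) (v : m → R) :
    v ⬝ᵥ ((X * B * Xᵀ) *ᵥ v) = (Xᵀ *ᵥ v) ⬝ᵥ (B *ᵥ (Xᵀ *ᵥ v)) := by
  rw [← mulVec_mulVec, ← mulVec_mulVec, dotProduct_mulVec, ← mulVec_transpose]

end Matrix

lemma card_le_finrank_of_supported_injective {ι V : Type*} [Fintype ι] [AddCommGroup V]
    [Module ℝ V] [FiniteDimensional ℝ V] (s : Finset ι) (T : (ι → ℝ) →ₗ[ℝ] V)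
    (hT : ∀ c, (∀ i ∉ s, c i = 0) → T c = 0 → c = 0) : #s ≤ Module.finrank ℝ V := by
  classical
  set E := Function.ExtendByZero.linearMap ℝ (Subtype.val : s → ι)
  have hE_supp (c : s → ℝ) : ∀ i ∉ s, E c i = 0 := fun i hi =>
    Function.extend_apply' _ _ _ fun ⟨a, ha⟩ => hi (ha ▸ a.2)
  have hinj : Function.Injective (T ∘ₗ E) := by
    refine (injective_iff_map_eq_zero _).2 fun c hc => funext fun i => ?_
    have := congrFun (hT (E c) (hE_supp c) hc) i
    rwa [Function.ExtendByZero.linearMap_apply, Subtype.val_injective.extend_apply] at this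
  simpa using LinearMap.finrank_le_finrank_of_injective hinj

lemma eq_zero_of_sum_mul_sq_nonpos {ι : Type*} [Fintype ι] {s : Finset ι} {w c : ι → ℝ}
    (hw : ∀ i ∈ s, 0 < w i) (hc : ∀ i ∉ s, c i = 0) (h : ∑ i, w i * c i ^ 2 ≤ 0) :
    c = 0 := by
  have hterm : ∀ i ∈ univ, 0 ≤ w i * c i ^ 2 := fun i _ => by
    by_cases hi : i ∈ s
    · have := hw i hi; positivity
    · simp [hc i hi]
  have hzero := (sum_eq_zero_iff_of_nonneg hterm).1 (h.antisymm (sum_nonneg hterm))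
  funext i
  by_cases hi : i ∈ s
  · simpa [(hw i hi).ne'] using hzero i (mem_univ i)
  · exact hc i hi

namespace Matrix.IsHermitian

variable {n : Type*} [Fintype n] [DecidableEq n] {A : Matrix n n ℝ} (hA : A.IsHermitian)
include hA

lemma dotProduct_mulVec_eigenvectorUnitary (c : n → ℝ) :
    ((hA.eigenvectorUnitary : Matrix n n ℝ) *ᵥ c) ⬝ᵥ
      (A *ᵥ ((hA.eigenvectorUnitary : Matrix n n ℝ) *ᵥ c)) =
      ∑ i, hA.eigenvalues i * c i ^ 2 := by
  set U : Matrix n n ℝ := (hA.eigenvectorUnitary : Matrix n n ℝ)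
  have hUU : Uᵀ * U = 1 := Unitary.coe_star_mul_self hA.eigenvectorUnitary
  conv_lhs => rw [hA.spectral_theorem, Unitary.conjStarAlgAut_apply]
  rw [mulVec_mulVec, star_eq_conjTranspose, conjTranspose_eq_transpose_of_trivial,
    mul_assoc _ Uᵀ U, hUU, mul_one, dotProduct_mulVec, ← vecMul_transpose, vecMul_vecMul,
    ← mul_assoc, hUU, one_mul]
  simp only [dotProduct, vecMul_diagonal, Function.comp_apply, RCLike.ofReal_real_eq_id, id]
  exact sum_congr rfl fun i _ => by ring

variable {V : Type*} [AddCommGroup V] [Module ℝ V] [FiniteDimensional ℝ V]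

/-- On the span of the eigenvectors with positive eigenvalue the quadratic form is positive
definite, so `L` is injective there. -/
theorem card_pos_eigenvalues_le (L : (n → ℝ) →ₗ[ℝ] V)
    (hL : ∀ v, L v = 0 → v ⬝ᵥ (A *ᵥ v) ≤ 0) :
    #{i | 0 < hA.eigenvalues i} ≤ Module.finrank ℝ V := by
  refine card_le_finrank_of_supported_injective _
    (L ∘ₗ (hA.eigenvectorUnitary : Matrix n n ℝ).mulVecLin) fun c hc hLc =>
      eq_zero_of_sum_mul_sq_nonpos (fun i hi => (mem_filter.1 hi).2) hc ?_
  rw [← hA.dotProduct_mulVec_eigenvectorUnitary]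
  exact hL _ hLc

theorem card_neg_eigenvalues_le (L : (n → ℝ) →ₗ[ℝ] V)
    (hL : ∀ v, L v = 0 → 0 ≤ v ⬝ᵥ (A *ᵥ v)) :
    #{i | hA.eigenvalues i < 0} ≤ Module.finrank ℝ V := by
  refine card_le_finrank_of_supported_injective _
    (L ∘ₗ (hA.eigenvectorUnitary : Matrix n n ℝ).mulVecLin) fun c hc hLc =>
      eq_zero_of_sum_mul_sq_nonpos (w := -hA.eigenvalues)
        (fun i hi => neg_pos.2 (mem_filter.1 hi).2) hc ?_
  simp only [Pi.neg_apply, neg_mul, sum_neg_distrib, neg_nonpos,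
    ← hA.dotProduct_mulVec_eigenvectorUnitary]
  exact hL _ hLc

theorem card_pos_add_card_neg_eigenvalues :
    #{i | 0 < hA.eigenvalues i} + #{i | hA.eigenvalues i < 0} = A.rank := by
  rw [hA.rank_eq_card_non_zero_eigs, Fintype.card_subtype, ← card_union_of_disjoint]
  · congr 1
    ext i
    simp only [mem_filter, mem_univ, true_and, mem_union]
    rw [ne_iff_lt_or_gt, or_comm]
  · exact disjoint_filter.2 fun i _ h h' => (h.trans h').false

theorem card_zero_eigenvalues :
    #{i | hA.eigenvalues i = 0} = Fintype.card n - A.rank := by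
  rw [hA.rank_eq_card_non_zero_eigs, Fintype.card_subtype, ← card_univ,
    ← card_filter_add_card_filter_not (fun i => hA.eigenvalues i = 0) (s := univ)]
  simp

end Matrix.IsHermitian

lemma isUnit_det_lorJ (d : ℕ) : IsUnit (lorJ d).det := by
  rw [lorJ, det_diagonal, isUnit_iff_ne_zero, prod_ne_zero_iff]
  intro i _
  split_ifs <;> norm_num

lemma dotProduct_lorJ_mulVec {d : ℕ} (w : Fin (d + 1) → ℝ) :
    w ⬝ᵥ (lorJ d *ᵥ w) = w 0 ^ 2 - ∑ j : Fin d, w j.succ ^ 2 := by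
  simp [lorJ, dotProduct, mulVec_diagonal, Fin.sum_univ_succ, Fin.succ_ne_zero, sq, sub_eq_add_neg]

theorem stmt_14_general {d l : ℕ}
    (X : Matrix (Fin l) (Fin (d + 1)) ℝ) (hrank : X.rank = d + 1)
    (hM : (X * lorJ d * Xᵀ).IsHermitian) :
    (Finset.univ.filter fun i => 0 < hM.eigenvalues i).card = 1 ∧
    (Finset.univ.filter fun i => hM.eigenvalues i < 0).card = d ∧
    (Finset.univ.filter fun i => hM.eigenvalues i = 0).card = l - (d + 1) := by
  have hrankM : (X * lorJ d * Xᵀ).rank = d + 1 := by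
    rw [rank_mul_eq_left_of_rank_eq_card _ _ (by simpa [rank_transpose] using hrank),
      rank_mul_eq_left_of_isUnit_det _ _ (isUnit_det_lorJ d), hrank]
  have hquad (v : Fin l → ℝ) : v ⬝ᵥ ((X * lorJ d * Xᵀ) *ᵥ v) =
      (Xᵀ *ᵥ v) 0 ^ 2 - ∑ j : Fin d, (Xᵀ *ᵥ v) j.succ ^ 2 := by
    rw [dotProduct_mul_mul_transpose_mulVec, dotProduct_lorJ_mulVec]
  have hpos : #{i | 0 < hM.eigenvalues i} ≤ 1 := by
    simpa using hM.card_pos_eigenvalues_le (LinearMap.proj 0 ∘ₗ Xᵀ.mulVecLin) fun v hv => by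
      have hv0 : (Xᵀ *ᵥ v) 0 = 0 := hv
      rw [hquad, hv0]
      have := sum_nonneg fun (j : Fin d) (_ : j ∈ univ) => sq_nonneg ((Xᵀ *ᵥ v) j.succ)
      linarith
  have hneg : #{i | hM.eigenvalues i < 0} ≤ d := by
    simpa using hM.card_neg_eigenvalues_le
      (LinearMap.funLeft ℝ ℝ Fin.succ ∘ₗ Xᵀ.mulVecLin) fun v hv => by
      have hv_succ (j : Fin d) : (Xᵀ *ᵥ v) j.succ = 0 := congrFun hv j
      simp only [hquad, hv_succ]
      simpa using sq_nonneg _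
  have hsum := hM.card_pos_add_card_neg_eigenvalues
  have hzero := hM.card_zero_eigenvalues
  simp only [hrankM, Fintype.card_fin] at hsum hzero
  exact ⟨by omega, by omega, hzero⟩

/-- for `X` of full column rank `d+1`, the matrix `X J Xᵀ` has
exactly one positive eigenvalue, exactly `d` negative eigenvalues, and the
eigenvalue `0` with multiplicity `l − d − 1`. -/
theorem stmt_14 {d l : ℕ} (hd : 1 ≤ d) (hl : d + 1 ≤ l)
    (X : Matrix (Fin l) (Fin (d + 1)) ℝ) (hrank : X.rank = d + 1)
    (hM : (X * lorJ d * Xᵀ).IsHermitian) :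
    (Finset.univ.filter fun i => 0 < hM.eigenvalues i).card = 1 ∧
    (Finset.univ.filter fun i => hM.eigenvalues i < 0).card = d ∧
    (Finset.univ.filter fun i => hM.eigenvalues i = 0).card = l - (d + 1) :=
  stmt_14_general X hrank hM
end

section
/- Let l ≥ d+1 and let A_L ∈ ℝ^{l×l} be symmetric with eigenvalues λ₁ ≥ λ₂ ≥ ⋯ ≥ λ_l, and assume λ₁ ≥ 0 and λ_i ≤ 0 for i ≥ l−d+1. Then the minimum of ‖A_L − X J X^⊤‖_F² over all X ∈ ℝ^{l×(d+1)} equals Σ_{i=2}^{l−d} λ_i². In particular, if λ_i = 0 for all 2 ≤ i ≤ l−d, then there exists X ∈ ℝ^{l×(d+1)} with A_L = X J X^⊤ exactly. -/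
open Matrix Finset

/-!
For any `X`, the matrix `B = X J Xᵀ` is negative semidefinite on the hyperplane `(xᵀX)₀ = 0` and
positive semidefinite on the codimension-`d` subspace `(xᵀX)ᵣ = 0` (`r ≥ 1`). A dimension count as
in Courant–Fischer then interlaces the eigenvalues `μ` of `A_L - B` with those of `A_L`:
`λ_{i+1} ≤ μ_i` and `μ_{i+d} ≤ λ_i` (indices from `0`). Matching each middle eigenvalue `λ_i`,
`1 ≤ i < l - d`, with `μ_{i-1}` if `λ_i ≥ 0` and with `μ_{i+d}` otherwise gives
`∑ λ_i² ≤ ∑ μ_j² = ‖A_L - B‖_F²`. Equality holds for `X = X̂_L`, whose `X̂_L J X̂_Lᵀ` is the part of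
the spectral decomposition of `A_L` carried by `λ_0` and `λ_{l-d}, …, λ_{l-1}`.
-/

section QuadraticForm

variable {m n : Type*} [Fintype m] [Fintype n]

lemma quadForm_mul_diagonal_mul_transpose [DecidableEq n] (M : Matrix m n ℝ) (e : n → ℝ)
    (x : m → ℝ) : x ⬝ᵥ (M * diagonal e * Mᵀ) *ᵥ x = ∑ j, e j * (x ᵥ* M) j ^ 2 := by
  rw [← mulVec_mulVec, ← mulVec_mulVec, dotProduct_mulVec, mulVec_transpose, dotProduct_mulVec,
    dotProduct]
  exact sum_congr rfl fun j _ => by rw [vecMul_diagonal]; ring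

lemma sum_vecMul_sq_of_mul_transpose_eq_one [DecidableEq m] {Q : Matrix m n ℝ}
    (hQ : Q * Qᵀ = 1) (x : m → ℝ) : ∑ j, (x ᵥ* Q) j ^ 2 = x ⬝ᵥ x := by
  simp_rw [sq]
  rw [← dotProduct, ← dotProduct_mulVec, ← mulVec_transpose, mulVec_mulVec, hQ, one_mulVec]

variable [LinearOrder n] [DecidableEq m] [DecidableEq n] {Q : Matrix m n ℝ} {α : n → ℝ}

lemma mul_dotProduct_self_le_quadForm (hQ : Q * Qᵀ = 1) (hα : Antitone α) {x : m → ℝ} {i : n}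
    (hx : ∀ b, i < b → (x ᵥ* Q) b = 0) :
    α i * (x ⬝ᵥ x) ≤ x ⬝ᵥ (Q * diagonal α * Qᵀ) *ᵥ x := by
  rw [quadForm_mul_diagonal_mul_transpose, ← sum_vecMul_sq_of_mul_transpose_eq_one hQ,
    mul_sum]
  refine sum_le_sum fun b _ => ?_
  rcases le_or_gt b i with hb | hb
  · exact mul_le_mul_of_nonneg_right (hα hb) (sq_nonneg _)
  · simp [hx b hb]

lemma quadForm_le_mul_dotProduct_self (hQ : Q * Qᵀ = 1) (hα : Antitone α) {x : m → ℝ} {j : n}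
    (hx : ∀ a, a < j → (x ᵥ* Q) a = 0) :
    x ⬝ᵥ (Q * diagonal α * Qᵀ) *ᵥ x ≤ α j * (x ⬝ᵥ x) := by
  rw [quadForm_mul_diagonal_mul_transpose, ← sum_vecMul_sq_of_mul_transpose_eq_one hQ,
    mul_sum]
  refine sum_le_sum fun a _ => ?_
  rcases le_or_gt j a with ha | ha
  · exact mul_le_mul_of_nonneg_right (hα ha) (sq_nonneg _)
  · simp [hx a ha]

end QuadraticForm

section Interlacing

variable {l : ℕ} {F : Type*} [AddCommGroup F] [Module ℝ F] [FiniteDimensional ℝ F]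

/-- The `j + (l - 1 - i) + finrank F < l` linear constraints have a nonzero common solution. -/
lemma exists_ne_zero_vecMul_eq_zero (Q W : Matrix (Fin l) (Fin l) ℝ)
    (φ : (Fin l → ℝ) →ₗ[ℝ] F) {i j : Fin l} (hij : (j : ℕ) + Module.finrank ℝ F ≤ i) :
    ∃ x ≠ 0, (∀ a, a < j → (x ᵥ* W) a = 0) ∧ (∀ b, i < b → (x ᵥ* Q) b = 0) ∧ φ x = 0 := by
  let L := (LinearMap.pi fun a : Fin j => LinearMap.proj (Fin.castLE j.isLt.le a) ∘ₗ
      W.vecMulLinear).prod ((LinearMap.pi fun b : Fin (l - i - 1) =>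
        LinearMap.proj (⟨i + 1 + b, by omega⟩ : Fin l) ∘ₗ Q.vecMulLinear).prod φ)
  have hL : LinearMap.ker L ≠ ⊥ := LinearMap.ker_ne_bot_of_finrank_lt <| by
    simp only [Module.finrank_prod, Module.finrank_fin_fun]
    omega
  obtain ⟨x, hx, hx0⟩ := Submodule.exists_mem_ne_zero_of_ne_bot hL
  simp only [L, LinearMap.ker_prod, Submodule.mem_inf, LinearMap.mem_ker, funext_iff,
    LinearMap.pi_apply, LinearMap.coe_comp, LinearMap.coe_proj, Function.comp_apply, Function.eval,
    LinearMap.flip_apply, vecMulBilin_apply, Pi.zero_apply] at hx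
  obtain ⟨hW, hQ, hφ⟩ := hx
  refine ⟨x, hx0, fun a ha => hW ⟨a, ha⟩, fun b hb => ?_, hφ⟩
  simpa [show i + 1 + (b - i - 1 : ℕ) = b by omega] using hQ ⟨b - i - 1, by omega⟩

variable {Q W B : Matrix (Fin l) (Fin l) ℝ} {α μ : Fin l → ℝ}

lemma le_eigenvalue_sub_of_nonpos_on_ker (hQ : Q * Qᵀ = 1) (hW : W * Wᵀ = 1)
    (hα : Antitone α) (hμ : Antitone μ) (hC : Q * diagonal α * Qᵀ - B = W * diagonal μ * Wᵀ)
    (φ : (Fin l → ℝ) →ₗ[ℝ] F) (hB : ∀ x, φ x = 0 → x ⬝ᵥ B *ᵥ x ≤ 0) {i j : Fin l}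
    (hij : (j : ℕ) + Module.finrank ℝ F ≤ i) : α i ≤ μ j := by
  obtain ⟨x, hx0, hxW, hxQ, hφ⟩ := exists_ne_zero_vecMul_eq_zero Q W φ hij
  have hsplit : x ⬝ᵥ (W * diagonal μ * Wᵀ) *ᵥ x
      = x ⬝ᵥ (Q * diagonal α * Qᵀ) *ᵥ x - x ⬝ᵥ B *ᵥ x := by
    rw [← hC, sub_mulVec, dotProduct_sub]
  have hA := mul_dotProduct_self_le_quadForm hQ hα hxQ
  have hC' := quadForm_le_mul_dotProduct_self hW hμ hxW
  have hpos : 0 < x ⬝ᵥ x := by simpa using dotProduct_star_self_pos_iff.mpr hx0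
  nlinarith [hB x hφ]

end Interlacing

lemma Matrix.IsHermitian.exists_antitone_diagonalization {l : ℕ} {C : Matrix (Fin l) (Fin l) ℝ}
    (hC : C.IsHermitian) :
    ∃ (W : Matrix (Fin l) (Fin l) ℝ) (μ : Fin l → ℝ),
      W * Wᵀ = 1 ∧ Antitone μ ∧ C = W * diagonal μ * Wᵀ := by
  set U : Matrix (Fin l) (Fin l) ℝ := (hC.eigenvectorUnitary : Matrix (Fin l) (Fin l) ℝ)
  have hU : U * Uᵀ = 1 := by
    simpa [star_eq_conjTranspose] using
      (mem_unitaryGroup_iff.mp hC.eigenvectorUnitary.2 : U * star U = 1)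
  have hspec : C = U * diagonal hC.eigenvalues * Uᵀ := by
    simpa [Unitary.conjStarAlgAut_apply, star_eq_conjTranspose] using hC.spectral_theorem
  set σ : Equiv.Perm (Fin l) := Tuple.sort (fun i => -hC.eigenvalues i)
  have htr : (U.submatrix id σ)ᵀ = Uᵀ.submatrix σ id := rfl
  refine ⟨U.submatrix id σ, hC.eigenvalues ∘ σ, ?_, ?_, ?_⟩
  · rw [htr, submatrix_mul_equiv, hU]
    rfl
  · intro a b hab
    simpa using Tuple.monotone_sort (fun i => -hC.eigenvalues i) hab
  · rw [← submatrix_diagonal_equiv, htr, submatrix_mul_equiv, submatrix_mul_equiv]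
    simpa using hspec

lemma frobSq_eq_trace_mul_transpose {a b : ℕ} (M : Matrix (Fin a) (Fin b) ℝ) :
    frobSq M = trace (M * Mᵀ) := by
  simp [frobSq, trace, mul_apply, sq]

lemma frobSq_mul_diagonal_mul_transpose {l : ℕ} {Q : Matrix (Fin l) (Fin l) ℝ}
    (hQ : Qᵀ * Q = 1) (v : Fin l → ℝ) : frobSq (Q * diagonal v * Qᵀ) = ∑ i, v i ^ 2 := by
  have hsq : Q * diagonal v * Qᵀ * (Q * diagonal v * Qᵀ)ᵀ = Q * (diagonal v * diagonal v) * Qᵀ := by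
    simp only [transpose_mul, transpose_transpose, diagonal_transpose, Matrix.mul_assoc]
    rw [← Matrix.mul_assoc Qᵀ Q, hQ, Matrix.one_mul]
  rw [frobSq_eq_trace_mul_transpose, hsq, trace_mul_cycle, hQ, Matrix.one_mul,
    diagonal_mul_diagonal, trace_diagonal]
  simp only [sq]

lemma quadForm_lorJ {l d : ℕ} (X : Matrix (Fin l) (Fin (d + 1)) ℝ) (x : Fin l → ℝ) :
    x ⬝ᵥ (X * lorJ d * Xᵀ) *ᵥ x = (x ᵥ* X) 0 ^ 2 - ∑ r : Fin d, (x ᵥ* X) r.succ ^ 2 := by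
  simp [lorJ, quadForm_mul_diagonal_mul_transpose, Fin.sum_univ_succ, sub_eq_add_neg]

lemma quadForm_lorJ_nonpos {l d : ℕ} (X : Matrix (Fin l) (Fin (d + 1)) ℝ) {x : Fin l → ℝ}
    (hx : (x ᵥ* X) 0 = 0) : x ⬝ᵥ (X * lorJ d * Xᵀ) *ᵥ x ≤ 0 := by
  rw [quadForm_lorJ, hx]
  simpa using sum_nonneg fun (r : Fin d) _ => sq_nonneg ((x ᵥ* X) r.succ)

lemma quadForm_lorJ_nonneg {l d : ℕ} (X : Matrix (Fin l) (Fin (d + 1)) ℝ) {x : Fin l → ℝ}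
    (hx : ∀ r : Fin d, (x ᵥ* X) r.succ = 0) : 0 ≤ x ⬝ᵥ (X * lorJ d * Xᵀ) *ᵥ x := by
  simpa [quadForm_lorJ, hx] using sq_nonneg ((x ᵥ* X) 0)

/-- Match a middle index `i` with `i - 1` if `α i ≥ 0` and with `i + d` if `α i < 0`; this is
injective because `α` is antitone. -/
lemma sum_sq_middle_le_sum_sq {l d : ℕ} {α μ : Fin l → ℝ} (hα : Antitone α)
    (hle : ∀ i j : Fin l, (j : ℕ) + 1 ≤ i → α i ≤ μ j)
    (hge : ∀ i j : Fin l, (i : ℕ) + d ≤ j → μ j ≤ α i) :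
    ∑ i ∈ univ.filter (fun i : Fin l => 1 ≤ (i : ℕ) ∧ (i : ℕ) < l - d), α i ^ 2
      ≤ ∑ j, μ j ^ 2 := by
  set M := univ.filter (fun i : Fin l => 1 ≤ (i : ℕ) ∧ (i : ℕ) < l - d)
  let f : Fin l → Fin l := fun i =>
    if 0 ≤ α i then ⟨i - 1, by omega⟩ else ⟨min (i + d) (l - 1), by have := i.isLt; omega⟩
  have hmem : ∀ {i}, i ∈ M → 1 ≤ (i : ℕ) ∧ (i : ℕ) < l - d := fun hi => (mem_filter.mp hi).2
  have hf_nonneg : ∀ {i}, i ∈ M → 0 ≤ α i → (f i : ℕ) = i - 1 := fun _ h => by simp [f, h]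
  have hf_neg : ∀ {i}, i ∈ M → α i < 0 → (f i : ℕ) = i + d := fun hi h => by
    have := hmem hi
    simp [f, not_le.mpr h]
    omega
  have hsq : ∀ i ∈ M, α i ^ 2 ≤ μ (f i) ^ 2 := by
    intro i hi
    have := hmem hi
    rcases le_or_gt 0 (α i) with h | h
    · have := hle i (f i) (by rw [hf_nonneg hi h]; omega)
      nlinarith
    · have := hge i (f i) (by rw [hf_neg hi h])
      nlinarith
  have hinj : Set.InjOn f M := by
    intro i hi i' hi' hii'
    have hval := congrArg Fin.val hii'
    have := hmem hi
    have := hmem hi'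
    rcases le_or_gt 0 (α i) with h | h <;> rcases le_or_gt 0 (α i') with h' | h'
    · rw [hf_nonneg hi h, hf_nonneg hi' h'] at hval
      exact Fin.ext (by omega)
    · rw [hf_nonneg hi h, hf_neg hi' h'] at hval
      linarith [hα (show i' ≤ i from Fin.le_def.mpr (by omega))]
    · rw [hf_neg hi h, hf_nonneg hi' h'] at hval
      linarith [hα (show i ≤ i' from Fin.le_def.mpr (by omega))]
    · rw [hf_neg hi h, hf_neg hi' h'] at hval
      exact Fin.ext (by omega)
  calc ∑ i ∈ M, α i ^ 2 ≤ ∑ i ∈ M, μ (f i) ^ 2 := sum_le_sum hsq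
    _ = ∑ j ∈ M.image f, μ j ^ 2 := by rw [sum_image hinj]
    _ ≤ ∑ j, μ j ^ 2 := sum_le_sum_of_subset_of_nonneg (subset_univ _) fun _ _ _ => sq_nonneg _

lemma sum_sq_middle_le_frobSq_sub {d l : ℕ} {A Q : Matrix (Fin l) (Fin l) ℝ} {lam : Fin l → ℝ}
    (hsym : Aᵀ = A) (hQ : Qᵀ * Q = 1) (hlam : Antitone lam) (hA : A = Q * diagonal lam * Qᵀ)
    (X : Matrix (Fin l) (Fin (d + 1)) ℝ) :
    ∑ i ∈ univ.filter (fun i : Fin l => 1 ≤ (i : ℕ) ∧ (i : ℕ) < l - d), lam i ^ 2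
      ≤ frobSq (A - X * lorJ d * Xᵀ) := by
  set B := X * lorJ d * Xᵀ
  have hB : Bᵀ = B := by simp [B, lorJ, Matrix.mul_assoc]
  have hC : (A - B).IsHermitian := by
    rw [IsHermitian, conjTranspose_eq_transpose_of_trivial, transpose_sub, hsym, hB]
  obtain ⟨W, μ, hW, hμ, hCW⟩ := hC.exists_antitone_diagonalization
  have hQ' : Q * Qᵀ = 1 := mul_eq_one_comm.mp hQ
  have hle : ∀ i j : Fin l, (j : ℕ) + 1 ≤ i → lam i ≤ μ j := fun i j hij =>
    le_eigenvalue_sub_of_nonpos_on_ker hQ' hW hlam hμ (hA ▸ hCW)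
      (LinearMap.proj 0 ∘ₗ X.vecMulLinear)
      (fun x hx => quadForm_lorJ_nonpos X (by simpa using hx)) (by simpa using hij)
  have hCW' : W * diagonal μ * Wᵀ - -B = Q * diagonal lam * Qᵀ := by
    rw [← hCW, sub_neg_eq_add, sub_add_cancel, hA]
  have hge : ∀ i j : Fin l, (i : ℕ) + d ≤ j → μ j ≤ lam i := fun i j hij =>
    le_eigenvalue_sub_of_nonpos_on_ker hW hQ' hμ hlam hCW'
      ((LinearMap.pi fun r : Fin d => LinearMap.proj r.succ) ∘ₗ X.vecMulLinear)
      (fun x hx => by simpa [neg_mulVec] using quadForm_lorJ_nonneg X fun r => congrFun hx r)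
      (by simpa using hij)
  rw [hCW, frobSq_mul_diagonal_mul_transpose (mul_eq_one_comm.mp hW)]
  exact sum_sq_middle_le_sum_sq hlam hle hge

lemma mul_diagonal_mul_transpose_apply {m n : Type*} [Fintype n] [DecidableEq n]
    (M : Matrix m n ℝ) (e : n → ℝ) (i i' : m) :
    (M * diagonal e * Mᵀ) i i' = ∑ j, e j * M i j * M i' j := by
  rw [mul_apply]
  simp only [mul_diagonal, transpose_apply]
  exact sum_congr rfl fun j _ => by ring

section Embedding

variable {d l : ℕ} (hl : d + 1 ≤ l)

lemma colIdx_injective : Function.Injective (colIdx (d := d) hl) := by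
  intro j j' h
  unfold colIdx at h
  split_ifs at h <;> simp only [Fin.ext_iff] at h ⊢ <;> omega

lemma colIdx_not_middle (j : Fin (d + 1)) :
    ¬(1 ≤ (colIdx hl j : ℕ) ∧ (colIdx hl j : ℕ) < l - d) := by
  unfold colIdx
  split_ifs <;> simp
  omega

lemma exists_colIdx_eq {k : Fin l} (hk : ¬(1 ≤ (k : ℕ) ∧ (k : ℕ) < l - d)) :
    ∃ j, colIdx hl j = k := by
  rcases Nat.eq_zero_or_pos (k : ℕ) with h0 | hpos
  · exact ⟨0, Fin.ext (by simp [colIdx, h0])⟩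
  · refine ⟨⟨k - (l - d - 1), by omega⟩, Fin.ext ?_⟩
    simp only [colIdx]
    split_ifs <;> simp <;> omega

variable {Q : Matrix (Fin l) (Fin l) ℝ} {lam : Fin l → ℝ}

lemma lorJ_mul_hatXL_mul_hatXL (hpos : 0 ≤ lam ⟨0, by omega⟩)
    (hneg : ∀ i : Fin l, l - d ≤ (i : ℕ) → lam i ≤ 0) (i i' : Fin l) (j : Fin (d + 1)) :
    (if j = 0 then 1 else -1) * hatXL hl Q lam i j * hatXL hl Q lam i' j
      = lam (colIdx hl j) * Q i (colIdx hl j) * Q i' (colIdx hl j) := by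
  by_cases h0 : j = 0
  · subst h0
    have hsq := Real.sq_sqrt (show 0 ≤ lam (colIdx hl 0) from hpos)
    simp only [hatXL, of_apply, if_true, Fin.val_zero]
    linear_combination Q i (colIdx hl 0) * Q i' (colIdx hl 0) * hsq
  · have hj : (j : ℕ) ≠ 0 := Fin.val_ne_iff.mpr h0
    have hsq := Real.sq_sqrt (show 0 ≤ -lam (colIdx hl j) by
      linarith [hneg (colIdx hl j) (by simp only [colIdx, if_neg hj]; omega)])
    simp only [hatXL, of_apply, if_neg h0, if_neg hj]
    linear_combination -(Q i (colIdx hl j) * Q i' (colIdx hl j)) * hsq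

lemma hatXL_mul_lorJ_mul_transpose (hpos : 0 ≤ lam ⟨0, by omega⟩)
    (hneg : ∀ i : Fin l, l - d ≤ (i : ℕ) → lam i ≤ 0) :
    hatXL hl Q lam * lorJ d * (hatXL hl Q lam)ᵀ
      = Q * diagonal (fun k : Fin l => if 1 ≤ (k : ℕ) ∧ (k : ℕ) < l - d then 0 else lam k) *
          Qᵀ := by
  ext i i'
  rw [lorJ, mul_diagonal_mul_transpose_apply, mul_diagonal_mul_transpose_apply]
  refine Fintype.sum_of_injective _ (colIdx_injective hl) _ _ (fun k hk => ?_) (fun j => ?_)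
  · rw [if_pos (not_not.mp fun h => hk (exists_colIdx_eq hl h)), zero_mul, zero_mul]
  · rw [lorJ_mul_hatXL_mul_hatXL hl hpos hneg, if_neg (colIdx_not_middle hl j)]

lemma sub_hatXL_mul_lorJ_mul_transpose {A : Matrix (Fin l) (Fin l) ℝ}
    (hA : A = Q * diagonal lam * Qᵀ) (hpos : 0 ≤ lam ⟨0, by omega⟩)
    (hneg : ∀ i : Fin l, l - d ≤ (i : ℕ) → lam i ≤ 0) :
    A - hatXL hl Q lam * lorJ d * (hatXL hl Q lam)ᵀ
      = Q * diagonal (fun k : Fin l => if 1 ≤ (k : ℕ) ∧ (k : ℕ) < l - d then lam k else 0) *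
          Qᵀ := by
  rw [hatXL_mul_lorJ_mul_transpose hl hpos hneg, hA, ← Matrix.sub_mul, ← Matrix.mul_sub,
    diagonal_sub]
  congr 3 with k
  split_ifs <;> ring

end Embedding

/-- the minimum of `‖A_L − X J Xᵀ‖_F²` over all
`X ∈ ℝ^{l×(d+1)}` equals `Σ_{i=2}^{l−d} λ_i²`; in particular if those
eigenvalues vanish, `A_L` is represented exactly. -/
theorem stmt_15 {d l : ℕ} (hl : d + 1 ≤ l)
    (A_L : Matrix (Fin l) (Fin l) ℝ) (hsym : A_Lᵀ = A_L)
    (Q : Matrix (Fin l) (Fin l) ℝ) (hQ : Qᵀ * Q = 1)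
    (lam : Fin l → ℝ) (hdesc : ∀ i j : Fin l, i ≤ j → lam j ≤ lam i)
    (hdecomp : A_L = Q * Matrix.diagonal lam * Qᵀ)
    (hpos : 0 ≤ lam ⟨0, by omega⟩)
    (hneg : ∀ i : Fin l, l - d ≤ (i : ℕ) → lam i ≤ 0) :
    IsLeast {r : ℝ | ∃ X : Matrix (Fin l) (Fin (d + 1)) ℝ, r = frobSq (A_L - X * lorJ d * Xᵀ)}
      (∑ i ∈ Finset.univ.filter (fun i : Fin l => 1 ≤ (i : ℕ) ∧ (i : ℕ) < l - d), lam i ^ 2) ∧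
    ((∀ i : Fin l, 1 ≤ (i : ℕ) → (i : ℕ) < l - d → lam i = 0) →
      ∃ X : Matrix (Fin l) (Fin (d + 1)) ℝ, A_L = X * lorJ d * Xᵀ) := by
  have hres := sub_hatXL_mul_lorJ_mul_transpose hl hdecomp hpos hneg
  refine ⟨⟨⟨hatXL hl Q lam, ?_⟩, ?_⟩, fun hmid => ⟨hatXL hl Q lam, ?_⟩⟩
  · rw [hres, frobSq_mul_diagonal_mul_transpose hQ, sum_filter]
    exact sum_congr rfl fun k _ => by split_ifs <;> simp
  · rintro r ⟨X, rfl⟩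
    exact sum_sq_middle_le_frobSq_sub hsym hQ (fun i j h => hdesc i j h) hdecomp X
  · have hzero : (fun k : Fin l => if 1 ≤ (k : ℕ) ∧ (k : ℕ) < l - d then lam k else 0) = 0 :=
      funext fun k => by split_ifs with hk; exacts [hmid k hk.1 hk.2, rfl]
    rw [← sub_eq_zero, hres, hzero]
    simp
end
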